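/- arXiv:1806.00300 — 5 statements merged into one kernel-verified Lean document; each statement's English description precedes it below -/
import Mathlib

section
/- For any instance of G*_ε, the set of makespan values attained by local optima, {f(x) : x ∈ {0,1}ⁿ a local optimum}, has cardinality at most s+1. -/
/-- The load of machine `b` under assignment `x` (job `i` is on machine `x i`). -/
noncomputable def load {n : ℕ} (p : Fin n → ℝ) (x : Fin n → Bool) (b : Bool) : ℝ :=
  ∑ i ∈ Finset.univ.filter (fun i => x i = b), p i

/-- The makespan of a solution `x` of the Partition instance with processing times `p`. -/
noncomputable def makespan {n : ℕ} (p : Fin n → ℝ) (x : Fin n → Bool) : ℝ :=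
  max (load p x false) (load p x true)

/-- `x` is a local optimum: no solution at Hamming distance 1 has strictly smaller makespan. -/
def IsLocalOpt {n : ℕ} (p : Fin n → ℝ) (x : Fin n → Bool) : Prop :=
  ∀ j : Fin n, ¬ makespan p (Function.update x j (!x j)) < makespan p x

/-- The processing times of the generalised worst-case instance class `G*_ε`
with `n` jobs and `s` large jobs (indices `0,…,s-1` are the large jobs). -/
noncomputable def gProc (n s : ℕ) (ε : ℝ) : Fin n → ℝ := fun i =>
  if (i : ℕ) < s then 1 / (2 * (s : ℝ) - 1) - ε / (2 * s)
  else (((s : ℝ) - 1) / ((n : ℝ) - s)) * (1 / (2 * (s : ℝ) - 1) + ε / (2 * ((s : ℝ) - 1)))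

/-!
Moving a small job of size `pS > 0` off the fuller machine of a local optimum must not help, so if
that machine holds a small job its load `L` satisfies `T ≤ 2L ≤ T + pS`, where `T` is the total
load. If it holds `a` of the `s` large jobs (all of size `pL`) and `b` small ones, then
`L = a·pL + b·pS` and these inequalities force `b = ⌈(T/2 - a·pL)/pS⌉₊`. Hence the makespan of a
local optimum is determined by `a ∈ {0, …, s}`.
-/

open Finset

section Machines

variable {n : ℕ} (p : Fin n → ℝ) (x : Fin n → Bool)

lemma load_add_load_not (c : Bool) : load p x c + load p x (!c) = ∑ i, p i := by
  unfold load
  rw [← sum_filter_add_sum_filter_not univ (fun i => x i = c) p]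
  congr 2
  ext i
  cases c <;> simp

lemma load_le_makespan (c : Bool) : load p x c ≤ makespan p x := by
  cases c
  · exact le_max_left _ _
  · exact le_max_right _ _

lemma exists_makespan_eq_load :
    ∃ c, load p x (!c) ≤ load p x c ∧ makespan p x = load p x c := by
  rcases le_total (load p x false) (load p x true) with h | h
  · exact ⟨true, h, max_eq_right h⟩
  · exact ⟨false, h, max_eq_left h⟩

lemma load_update_self (j : Fin n) :
    load p (Function.update x j (!x j)) (x j) = load p x (x j) - p j := by
  unfold load
  have h : univ.filter (fun i => Function.update x j (!x j) i = x j)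
      = (univ.filter (fun i => x i = x j)).erase j := by
    ext i
    by_cases h : i = j <;> simp [Function.update, h]
  rw [h, sum_erase_eq_sub (by simp)]

lemma load_update_not (j : Fin n) :
    load p (Function.update x j (!x j)) (!x j) = load p x (!x j) + p j := by
  unfold load
  have h : univ.filter (fun i => Function.update x j (!x j) i = !x j)
      = insert j (univ.filter (fun i => x i = !x j)) := by
    ext i
    by_cases h : i = j <;> simp [Function.update, h]
  rw [h, sum_insert (by simp), add_comm]

lemma makespan_update (j : Fin n) :
    makespan p (Function.update x j (!x j))
      = max (load p x (x j) - p j) (load p x (!x j) + p j) := by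
  unfold makespan
  cases hx : x j
  · simpa [hx] using
      congrArg₂ max (load_update_self p x j) (load_update_not p x j)
  · simpa [hx, max_comm] using
      congrArg₂ max (load_update_not p x j) (load_update_self p x j)

lemma IsLocalOpt.load_le_load_not_add {p : Fin n → ℝ} {x : Fin n → Bool} (hx : IsLocalOpt p x)
    {j : Fin n} (hj : 0 < p j) : load p x (x j) ≤ load p x (!x j) + p j := by
  by_contra! h
  refine hx j ?_
  rw [makespan_update]
  exact max_lt (by linarith [load_le_makespan p x (x j)])
    (by linarith [load_le_makespan p x (x j)])

end Machines

lemma eq_natCeil_of_le_of_le {T c q : ℝ} {b : ℕ} (hq : 0 < q) (hlow : T ≤ 2 * (c + b * q))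
    (hup : b ≠ 0 → 2 * (c + b * q) ≤ T + q) : b = ⌈(T / 2 - c) / q⌉₊ := by
  symm
  rcases eq_or_ne b 0 with rfl | hb
  · rw [Nat.ceil_eq_zero]
    simp only [Nat.cast_zero, zero_mul, add_zero] at hlow
    exact div_nonpos_of_nonpos_of_nonneg (by linarith) hq.le
  · have hup := hup hb
    rw [Nat.ceil_eq_iff hb, Nat.cast_pred (Nat.pos_of_ne_zero hb), lt_div_iff₀ hq,
      div_le_iff₀ hq]
    constructor <;> linarith

section TwoValued

variable {n s : ℕ} {p : Fin n → ℝ} {pL pS : ℝ}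

lemma load_eq_of_twoValued (hp : ∀ i, p i = if (i : ℕ) < s then pL else pS)
    (x : Fin n → Bool) (c : Bool) :
    load p x c = #{i | x i = c ∧ (i : ℕ) < s} * pL + #{i | x i = c ∧ ¬ (i : ℕ) < s} * pS := by
  unfold load
  simp only [hp, sum_ite, sum_const, nsmul_eq_mul, filter_filter]

lemma makespan_mem_image_of_isLocalOpt (hp : ∀ i, p i = if (i : ℕ) < s then pL else pS)
    (hpS : 0 < pS) {x : Fin n → Bool} (hx : IsLocalOpt p x) :
    makespan p x ∈ (range (s + 1)).image
      (fun a : ℕ => a * pL + ⌈((∑ i, p i) / 2 - a * pL) / pS⌉₊ * pS) := by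
  obtain ⟨c, hfuller, hmakespan⟩ := exists_makespan_eq_load p x
  have htotal := load_add_load_not p x c
  have hload := load_eq_of_twoValued hp x c
  set a := #{i | x i = c ∧ (i : ℕ) < s}
  set b := #{i | x i = c ∧ ¬ (i : ℕ) < s}
  have ha : a ≤ s := by
    calc a ≤ #{i : Fin n | (i : ℕ) < s} := card_le_card fun i hi => by simp_all
      _ ≤ s := by rw [Fin.card_filter_val_lt]; exact min_le_right _ _
  have hb : b = ⌈((∑ i, p i) / 2 - a * pL) / pS⌉₊ := by
    refine eq_natCeil_of_le_of_le hpS (by linarith) fun hb => ?_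
    obtain ⟨j, hj⟩ := card_ne_zero.mp hb
    simp only [mem_filter, mem_univ, true_and] at hj
    have hpj : p j = pS := by rw [hp, if_neg hj.2]
    have hmove := hx.load_le_load_not_add (hpj ▸ hpS)
    rw [hj.1, hpj] at hmove
    linarith
  exact mem_image.mpr ⟨a, mem_range.mpr (Nat.lt_succ_of_le ha), by rw [hmakespan, hload, hb]⟩

theorem ncard_localOpt_makespans_le_of_twoValued
    (hp : ∀ i, p i = if (i : ℕ) < s then pL else pS) (hpS : 0 < pS) :
    {y : ℝ | ∃ x, IsLocalOpt p x ∧ makespan p x = y}.ncard ≤ s + 1 := by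
  calc _ ≤ ((range (s + 1)).image
          (fun a : ℕ => a * pL + ⌈((∑ i, p i) / 2 - a * pL) / pS⌉₊ * pS) : Set ℝ).ncard := by
        refine Set.ncard_le_ncard ?_ (finite_toSet _)
        rintro _ ⟨x, hx, rfl⟩
        exact makespan_mem_image_of_isLocalOpt hp hpS hx
    _ ≤ (range (s + 1)).card := by rw [Set.ncard_coe_finset]; exact card_image_le
    _ = s + 1 := card_range _

end TwoValued

theorem card_localOpt_makespans_le_general
    (n s : ℕ) (ε : ℝ) (h2s : 2 ≤ s) (hsn : s < n)
    (hε0 : 0 < ε) :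
    {y : ℝ | ∃ x : Fin n → Bool,
        IsLocalOpt (gProc n s ε) x ∧ makespan (gProc n s ε) x = y}.ncard ≤ s + 1 := by
  have hsR : (2 : ℝ) ≤ s := by exact_mod_cast h2s
  have hnR : (s : ℝ) < n := by exact_mod_cast hsn
  refine ncard_localOpt_makespans_le_of_twoValued (fun _ => rfl) ?_
  exact mul_pos (div_pos (by linarith) (by linarith))
    (add_pos (div_pos one_pos (by linarith)) (div_pos hε0 (by linarith)))

theorem card_localOpt_makespans_le
    (n s : ℕ) (ε : ℝ) (hn : Even n) (hs : Even s) (h2s : 2 ≤ s) (hsn : s < n)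
    (hε0 : 0 < ε) (hε1 : ε < 1 / (2 * (s : ℝ) - 1)) :
    {y : ℝ | ∃ x : Fin n → Bool,
        IsLocalOpt (gProc n s ε) x ∧ makespan (gProc n s ε) x = y}.ncard ≤ s + 1 :=
  card_localOpt_makespans_le_general n s ε h2s hsn hε0
end

section
/- Let n be a positive integer, let D and A be disjoint subsets of {1,…,n} with s := |D| + |A|, and let m be an integer with s < m and 2m ≤ n. If σ is a uniformly random permutation of {1,…,n}, then Pr[(∀ j ∈ D, σ(j) ≤ m) and (∀ j ∈ A, σ(j) > n−m)] ≥ ((m−s+1)/(n−s+1))^s. -/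
open Finset Nat Equiv

/-! Restricting a permutation of `Fin n` to `D ∪ A` gives an embedding, and every embedding of
`D ∪ A` extends to exactly `(n - s)!` permutations. The embeddings sending `D` into the first `m`
positions and `A` into the last `m` (disjoint windows, as `2m ≤ n`) number
`m^(|D|) m^(|A|) ≥ m^(s)` in falling-factorial notation, so the probability is at least
`m^(s) / n^(s) = ∏_{i<s} (m - i)/(n - i)`, and each factor is at least `(m - s + 1)/(n - s + 1)`. -/

theorem Nat.cast_descFactorial_eq_prod_range {R : Type*} [CommRing R] {n k : ℕ} (h : k ≤ n) :
    (n.descFactorial k : R) = ∏ i ∈ range k, ((n : R) - i) := by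
  rw [descFactorial_eq_prod_range, Nat.cast_prod]
  exact prod_congr rfl fun i hi => Nat.cast_sub (by have := mem_range.mp hi; omega)

theorem Nat.descFactorial_add_le_mul (m d a : ℕ) :
    m.descFactorial (d + a) ≤ m.descFactorial d * m.descFactorial a := by
  rw [← descFactorial_mul_descFactorial (Nat.le_add_right d a), Nat.add_sub_cancel_left,
    Nat.mul_comm]
  exact Nat.mul_le_mul_left _ (descFactorial_le a (Nat.sub_le m d))

theorem pow_le_descFactorial_div_descFactorial {m n s : ℕ} (hsm : s ≤ m) (hmn : m ≤ n) :
    (((m : ℝ) - s + 1) / ((n : ℝ) - s + 1)) ^ s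
      ≤ (m.descFactorial s : ℝ) / n.descFactorial s := by
  have hm : (m : ℝ) ≤ n := by exact_mod_cast hmn
  have hs : (s : ℝ) ≤ m := by exact_mod_cast hsm
  have factor_le : ∀ i ∈ range s,
      ((m : ℝ) - s + 1) / ((n : ℝ) - s + 1) ≤ (m - i) / (n - i) := by
    intro i hi
    have hi : (i : ℝ) + 1 ≤ s := by exact_mod_cast mem_range.mp hi
    rw [div_le_div_iff₀ (by linarith) (by linarith)]
    -- the difference of the two sides is `(s - 1 - i) * (n - m)`
    nlinarith [mul_nonneg (sub_nonneg.mpr hi) (sub_nonneg.mpr hm)]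
  calc _ = ∏ _i ∈ range s, ((m : ℝ) - s + 1) / ((n : ℝ) - s + 1) := by
        rw [prod_const, card_range]
    _ ≤ ∏ i ∈ range s, ((m : ℝ) - i) / (n - i) :=
        prod_le_prod (fun _ _ => div_nonneg (by linarith) (by linarith)) factor_le
    _ = _ := by
        rw [prod_div_distrib, cast_descFactorial_eq_prod_range hsm,
          cast_descFactorial_eq_prod_range (hsm.trans hmn)]

section

variable {α ι : Type*} [Fintype α] [DecidableEq α] [Fintype ι]

theorem Equiv.Perm.card_trans_toEmbedding_eq (i u : ι ↪ α) :
    Fintype.card {σ : Perm α // i.trans σ.toEmbedding = u}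
      = (Fintype.card α - Fintype.card ι)! := by
  obtain ⟨e, he⟩ := exists_extending_pair i u i.injective u.injective
  let fixing : {σ : Perm α // i.trans σ.toEmbedding = u}
      ≃ {τ : Perm α // ∀ a, ¬ a ∉ Set.range i → τ a = a} :=
    (Equiv.mulLeft e⁻¹).subtypeEquiv fun σ => by
      simp [Function.Embedding.ext_iff, Equiv.symm_apply_eq, he]
  rw [Fintype.card_congr (fixing.trans (Perm.subtypeEquivSubtypePerm (· ∉ Set.range i)).symm),
    Fintype.card_perm, Fintype.card_subtype_compl, Set.card_range_of_injective i.injective]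

theorem Equiv.Perm.card_filter_trans_toEmbedding [DecidableEq ι] (i : ι ↪ α)
    (P : (ι ↪ α) → Prop) [DecidablePred P] :
    #{σ : Perm α | P (i.trans σ.toEmbedding)}
      = #{u | P u} * (Fintype.card α - Fintype.card ι)! := by
  rw [card_eq_sum_card_fiberwise (f := fun σ => i.trans σ.toEmbedding) (t := {u | P u})
    fun σ hσ => by simpa using hσ, ← smul_eq_mul, ← sum_const]
  refine sum_congr rfl fun u hu => ?_
  rw [filter_filter, ← card_trans_toEmbedding_eq i u, Fintype.card_subtype]
  congr 1
  exact filter_congr fun σ _ => ⟨fun h => h.2, fun h => ⟨h ▸ (mem_filter.mp hu).2, h⟩⟩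

theorem descFactorial_mul_descFactorial_mul_factorial_le_card {D A W₁ W₂ : Finset α}
    (hDA : Disjoint D A) (hW : Disjoint W₁ W₂) :
    (#W₁).descFactorial #D * (#W₂).descFactorial #A * (Fintype.card α - (#D + #A))!
      ≤ #{σ : Perm α | (∀ j ∈ D, σ j ∈ W₁) ∧ ∀ j ∈ A, σ j ∈ W₂} := by
  classical
  let P : ((D : Set α) ⊕ (A : Set α) ↪ α) → Prop :=
    fun u => (∀ j, u (.inl j) ∈ W₁) ∧ ∀ j, u (.inr j) ∈ W₂
  let glue (fg : ((D : Set α) ↪ (W₁ : Set α)) × ((A : Set α) ↪ (W₂ : Set α))) : {u // P u} :=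
    ⟨(fg.1.sumMap fg.2).trans (.sumSet (disjoint_coe.mpr hW)),
      fun j => (fg.1 j).2, fun j => (fg.2 j).2⟩
  have glue_injective : glue.Injective := by
    rintro ⟨f, g⟩ ⟨f', g'⟩ h
    simp only [glue, Subtype.mk.injEq, Function.Embedding.ext_iff] at h
    refine Prod.ext (Function.Embedding.ext fun j => Subtype.ext ?_)
      (Function.Embedding.ext fun j => Subtype.ext ?_)
    · simpa using h (.inl j)
    · simpa using h (.inr j)
  have hevent : #{σ : Perm α | (∀ j ∈ D, σ j ∈ W₁) ∧ ∀ j ∈ A, σ j ∈ W₂}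
      = #{σ : Perm α | P ((Function.Embedding.sumSet (disjoint_coe.mpr hDA)).trans
          σ.toEmbedding)} := by
    refine congrArg card (filter_congr fun σ _ => ?_)
    simp only [P, Subtype.forall]
    rfl
  have hglue := Fintype.card_le_of_injective glue glue_injective
  rw [hevent, Perm.card_filter_trans_toEmbedding _ P, ← Fintype.card_subtype]
  simp only [Fintype.card_prod, Fintype.card_embedding_eq, Fintype.card_sum, coe_sort_coe,
    Fintype.card_coe] at hglue ⊢
  gcongr

end

theorem Fin.card_filter_le_val {n k : ℕ} : #{i : Fin n | k ≤ (i : ℕ)} = n - k := by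
  have hcompl : ({i | k ≤ (i : ℕ)} : Finset (Fin n)) =
      univ \ ({i | (i : ℕ) < k} : Finset (Fin n)) := by
    ext; simp
  rw [hcompl, card_univ_sdiff, Fin.card_filter_val_lt, Fintype.card_fin]
  omega

theorem Fin.descFactorial_mul_factorial_le_card_filter_perm {n m : ℕ} {D A : Finset (Fin n)}
    (hDA : Disjoint D A) (hm2 : 2 * m ≤ n) :
    m.descFactorial (#D + #A) * (n - (#D + #A))!
      ≤ #{σ : Perm (Fin n) | (∀ j ∈ D, (σ j : ℕ) + 1 ≤ m) ∧ ∀ j ∈ A, n - m < (σ j : ℕ) + 1} := by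
  let W₁ : Finset (Fin n) := {y | y < m}
  let W₂ : Finset (Fin n) := {y | n - m ≤ y}
  have hW : Disjoint W₁ W₂ := disjoint_filter.mpr fun y _ h₁ => by omega
  calc _ ≤ m.descFactorial #D * m.descFactorial #A * (n - (#D + #A))! :=
        Nat.mul_le_mul_right _ (descFactorial_add_le_mul m #D #A)
    _ = (#W₁).descFactorial #D * (#W₂).descFactorial #A
          * (Fintype.card (Fin n) - (#D + #A))! := by
        rw [Fin.card_filter_val_lt, Fin.card_filter_le_val, Fintype.card_fin,
          min_eq_right (by omega), Nat.sub_sub_self (by omega)]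
    _ ≤ _ := descFactorial_mul_descFactorial_mul_factorial_le_card hDA hW
    _ = _ := by
        congr 1
        ext σ
        simp only [mem_filter, mem_univ, true_and, W₁, W₂, Nat.lt_iff_add_one_le,
          add_le_add_iff_right]

theorem hypermutation_interval_prob_general
    (n : ℕ) (D A : Finset (Fin n)) (hDA : Disjoint D A)
    (m : ℕ) (hm : D.card + A.card < m) (hm2 : 2 * m ≤ n) :
    (((m : ℝ) - (D.card + A.card) + 1) / ((n : ℝ) - (D.card + A.card) + 1))
        ^ (D.card + A.card)
      ≤ ((Finset.univ.filter (fun σ : Equiv.Perm (Fin n) =>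
            (∀ j ∈ D, ((σ j : ℕ) + 1) ≤ m) ∧ (∀ j ∈ A, n - m < (σ j : ℕ) + 1))).card : ℝ)
          / (Nat.factorial n : ℝ) := by
  have hfac : ((n - (#D + #A))! * n.descFactorial (#D + #A) : ℝ) = n ! := by
    exact_mod_cast factorial_mul_descFactorial (by omega)
  calc _ ≤ (m.descFactorial (#D + #A) : ℝ) / n.descFactorial (#D + #A) := by
        exact_mod_cast pow_le_descFactorial_div_descFactorial hm.le (by omega)
    _ = (m.descFactorial (#D + #A) * (n - (#D + #A))! : ℕ) / (n ! : ℝ) := by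
        rw [← hfac]; push_cast; field_simp
    _ ≤ _ := by
        gcongr
        exact Fin.descFactorial_mul_factorial_le_card_filter_perm hDA hm2

/-- For a uniformly random permutation `σ` of `{1,…,n}` (modelled as `Fin n`, so that
job `j` gets 1-indexed position `(σ j : ℕ) + 1`), the probability that all positions of
`D` land among the first `m` positions and all positions of `A` land among the last `m`
positions is at least `((m - s + 1)/(n - s + 1))^s` where `s = |D| + |A|`. -/
theorem hypermutation_interval_prob
    (n : ℕ) (hn : 0 < n) (D A : Finset (Fin n)) (hDA : Disjoint D A)
    (m : ℕ) (hm : D.card + A.card < m) (hm2 : 2 * m ≤ n) :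
    (((m : ℝ) - (D.card + A.card) + 1) / ((n : ℝ) - (D.card + A.card) + 1))
        ^ (D.card + A.card)
      ≤ ((Finset.univ.filter (fun σ : Equiv.Perm (Fin n) =>
            (∀ j ∈ D, ((σ j : ℕ) + 1) ≤ m) ∧ (∀ j ∈ A, n - m < (σ j : ℕ) + 1))).card : ℝ)
          / (Nat.factorial n : ℝ) :=
  hypermutation_interval_prob_general n D A hDA m hm hm2
end

section
/- Let n be a positive integer, let a and c be reals with 0 < c < a ≤ 1/2, and let x ∈ {0,1}ⁿ have exactly (1/2 + a)·n one-bits (assumed to be an integer). Let k be an integer with 1 ≤ k ≤ n·(a−c)/(2a−c), let T be a uniformly random k-element subset of {1,…,n}, and let X_k be the string obtained from x by flipping exactly the bits with positions in T. Then, with δ := a·c/((2a+1)·(a−c)), the probability that X_k has fewer than n/2 one-bits is at most exp(−min(δ, δ²)·(1/2+a)·k/3). -/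
/-!
The number `Y = #(T ∩ O)` of one-bits of `x` hit by `T` is hypergeometric with mean
`μ = (1/2 + a) k`, and `X_k` has fewer than `n/2` one-bits iff `Y > (k + a n)/2`, which under the
bound on `k` is at least `(1 + δ) μ`. Chernoff's bound holds for `Y` because its moment generating
function is dominated by the binomial one: for `M_k = ∑_{#T = k} l ^ #(T ∩ O)`, double counting
gives `(k + 1) M_{k+1} = (n - k) M_k + (l - 1) ∑_{#S = k} l ^ #(S ∩ O) #(O \ S)`, and since the two
factors of the last sum are oppositely ordered, Chebyshev's sum inequality bounds it by
`M_k #O (n - k) / n`. Hence `M_k ≤ C(n, k) (1 + (l - 1) #O / n) ^ k`, and Markov's inequality with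
`l = 1 + δ` and `log (1 + δ) ≥ 2δ / (2 + δ)` give the exponent.
-/

open Finset

theorem Real.min_self_sq_div_three_le_one_add_mul_log_sub {d : ℝ} (hd : 0 ≤ d) :
    min d (d ^ 2) / 3 ≤ (1 + d) * Real.log (1 + d) - d := by
  have hmin : min d (d ^ 2) / 3 ≤ d ^ 2 / (d + 2) := by
    rw [div_le_div_iff₀ (by norm_num) (by positivity)]
    rcases le_total d 1 with h | h
    · rw [min_eq_right (by nlinarith)]
      nlinarith
    · rw [min_eq_left (by nlinarith)]
      nlinarith
  calc min d (d ^ 2) / 3 ≤ d ^ 2 / (d + 2) := hmin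
    _ = (1 + d) * (2 * d / (d + 2)) - d := by field_simp; ring
    _ ≤ (1 + d) * Real.log (1 + d) - d := by gcongr; exact Real.le_log_one_add_of_nonneg hd

namespace Finset

variable {α : Type*} [DecidableEq α]

theorem filter_notMem_powersetCard (s : Finset α) (k : ℕ) (a : α) :
    {S ∈ powersetCard k s | a ∉ S} = powersetCard k (s.erase a) := by
  ext S
  simp only [mem_filter, mem_powersetCard, subset_erase]
  tauto

variable [Fintype α]

theorem sum_powersetCard_succ_card_smul {M : Type*} [AddCommMonoid M] (k : ℕ)
    (F : Finset α → M) :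
    ∑ T ∈ powersetCard (k + 1) univ, #T • F T
      = ∑ S ∈ powersetCard k univ, ∑ i ∈ Sᶜ, F (insert i S) := by
  simp_rw [← sum_const, sum_sigma']
  refine sum_nbij' (fun p => ⟨p.1.erase p.2, p.2⟩) (fun p => ⟨insert p.2 p.1, p.2⟩)
    ?_ ?_ ?_ ?_ ?_
  · rintro ⟨T, i⟩ h
    simp only [mem_sigma, mem_powersetCard, subset_univ, true_and, mem_compl] at h ⊢
    exact ⟨by rw [card_erase_of_mem h.2, h.1]; rfl, notMem_erase i T⟩
  · rintro ⟨S, i⟩ h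
    simp only [mem_sigma, mem_powersetCard, subset_univ, true_and, mem_compl] at h ⊢
    exact ⟨by rw [card_insert_of_notMem h.2, h.1], mem_insert_self i S⟩
  · rintro ⟨T, i⟩ h
    simp only [mem_sigma] at h
    simp [insert_erase h.2]
  · rintro ⟨S, i⟩ h
    simp only [mem_sigma, mem_compl] at h
    simp [erase_insert h.2]
  · rintro ⟨T, i⟩ h
    simp only [mem_sigma] at h
    simp [insert_erase h.2]

theorem card_mul_sum_card_sdiff_powersetCard (O : Finset α) (k : ℕ) :
    Fintype.card α * ∑ S ∈ powersetCard k univ, #(O \ S)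
      = #O * (Fintype.card α - k) * (Fintype.card α).choose k := by
  have hcount : ∀ i : α, #{S ∈ powersetCard k univ | i ∉ S} = (Fintype.card α - 1).choose k := by
    intro i
    rw [filter_notMem_powersetCard, card_powersetCard, card_erase_of_mem (mem_univ i),
      card_univ]
  have hsum : ∑ S ∈ powersetCard k univ, #(O \ S) = #O * (Fintype.card α - 1).choose k := by
    simp_rw [sdiff_eq_filter, card_filter]
    rw [sum_comm, ← smul_eq_mul, ← sum_const]
    refine sum_congr rfl fun i _ => ?_
    rw [← hcount, card_filter]
  rw [hsum]
  rcases hn : Fintype.card α with _ | n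
  · simp [card_eq_zero.mp (Nat.eq_zero_of_le_zero (hn ▸ card_le_univ O))]
  · rw [Nat.add_sub_cancel, mul_left_comm, mul_assoc, mul_comm (n + 1), Nat.choose_mul_succ_eq]
    ring

section TiltedSum

variable (O : Finset α)

theorem sum_compl_pow_card_insert_inter (l : ℝ) (S : Finset α) :
    ∑ i ∈ Sᶜ, l ^ #(insert i S ∩ O) = l ^ #(S ∩ O) * (#Sᶜ + (l - 1) * #(O \ S)) := by
  have hterm : ∀ i ∈ Sᶜ,
      l ^ #(insert i S ∩ O) = l ^ #(S ∩ O) * (1 + (l - 1) * if i ∈ O then 1 else 0) := by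
    intro i hi
    by_cases hiO : i ∈ O
    · have hiSO : i ∉ S ∩ O := fun h => mem_compl.1 hi (mem_inter.1 h).1
      rw [insert_inter_of_mem hiO, card_insert_of_notMem hiSO, if_pos hiO]
      ring
    · rw [insert_inter_of_notMem hiO, if_neg hiO]
      ring
  have hfilter : {i ∈ Sᶜ | i ∈ O} = O \ S := by
    ext i
    simp only [mem_filter, mem_compl, mem_sdiff]
    tauto
  rw [sum_congr rfl hterm, ← mul_sum, sum_add_distrib, ← mul_sum, sum_boole, hfilter]
  simp

theorem succ_mul_sum_pow_card_inter (l : ℝ) (k : ℕ) :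
    (k + 1) * ∑ T ∈ powersetCard (k + 1) univ, l ^ #(T ∩ O)
      = (Fintype.card α - k) * ∑ S ∈ powersetCard k univ, l ^ #(S ∩ O)
        + (l - 1) * ∑ S ∈ powersetCard k univ, l ^ #(S ∩ O) * #(O \ S) := by
  have hcard : ∀ S ∈ powersetCard k (univ : Finset α), (#Sᶜ : ℝ) = Fintype.card α - k := by
    intro S hS
    rw [card_compl, Nat.cast_sub (card_le_univ S), (mem_powersetCard.1 hS).2]
  have hsucc : ((k : ℝ) + 1) * ∑ T ∈ powersetCard (k + 1) univ, l ^ #(T ∩ O)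
      = ∑ T ∈ powersetCard (k + 1) univ, #T • l ^ #(T ∩ O) := by
    rw [mul_sum]
    refine sum_congr rfl fun T hT => ?_
    rw [(mem_powersetCard.1 hT).2, nsmul_eq_mul]
    push_cast
    ring
  rw [hsucc, sum_powersetCard_succ_card_smul, mul_sum, mul_sum, ← sum_add_distrib]
  refine sum_congr rfl fun S hS => ?_
  rw [sum_compl_pow_card_insert_inter, hcard S hS]
  ring

theorem card_mul_sum_pow_card_inter_mul_card_sdiff_le {l : ℝ} (hl : 1 ≤ l) {k : ℕ}
    (hk : k ≤ Fintype.card α) :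
    Fintype.card α * ∑ S ∈ powersetCard k univ, l ^ #(S ∩ O) * #(O \ S)
      ≤ (∑ S ∈ powersetCard k univ, l ^ #(S ∩ O)) * (#O * (Fintype.card α - k)) := by
  have hanti : AntivaryOn (fun S => l ^ #(S ∩ O)) (fun S => (#(O \ S) : ℝ))
      (powersetCard k (univ : Finset α)) := by
    intro S _ T _ hST
    have hS := card_sdiff_add_card_inter O S
    have hT := card_sdiff_add_card_inter O T
    rw [inter_comm] at hS hT
    simp only [Nat.cast_lt] at hST
    exact pow_le_pow_right₀ hl (by omega)
  have hmean : (Fintype.card α : ℝ) * ∑ S ∈ powersetCard k univ, (#(O \ S) : ℝ)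
      = #O * (Fintype.card α - k) * (Fintype.card α).choose k := by
    have h := congrArg (Nat.cast (R := ℝ)) (card_mul_sum_card_sdiff_powersetCard O k)
    push_cast [Nat.cast_sub hk] at h
    exact h
  have hC : (0 : ℝ) < (Fintype.card α).choose k := by exact_mod_cast Nat.choose_pos hk
  have hcheb := hanti.card_mul_sum_le_sum_mul_sum
  rw [card_powersetCard, card_univ] at hcheb
  refine le_of_mul_le_mul_left ?_ hC
  calc ((Fintype.card α).choose k : ℝ)
        * (Fintype.card α * ∑ S ∈ powersetCard k univ, l ^ #(S ∩ O) * #(O \ S))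
      = Fintype.card α * ((Fintype.card α).choose k
          * ∑ S ∈ powersetCard k univ, l ^ #(S ∩ O) * #(O \ S)) := by ring
    _ ≤ Fintype.card α * ((∑ S ∈ powersetCard k univ, l ^ #(S ∩ O))
          * ∑ S ∈ powersetCard k univ, (#(O \ S) : ℝ)) := by gcongr
    _ = _ := by rw [mul_left_comm, hmean]; ring

theorem sum_pow_card_inter_le {l : ℝ} (hl : 1 ≤ l) (k : ℕ) :
    ∑ T ∈ powersetCard k univ, l ^ #(T ∩ O)
      ≤ (Fintype.card α).choose k * (1 + (l - 1) * #O / Fintype.card α) ^ k := by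
  set n := Fintype.card α
  set q := 1 + (l - 1) * #O / n with hq_def
  have hq : 0 ≤ q := by
    have := sub_nonneg.2 hl
    positivity
  induction k with
  | zero => simp
  | succ k ih =>
    rcases Nat.lt_or_ge k n with hkn | hnk
    swap
    · rw [powersetCard_eq_empty.2 (by rw [card_univ]; omega), sum_empty]
      positivity
    have hn : (0 : ℝ) < n := by exact_mod_cast hkn.trans_le' k.zero_le
    have hnk : (0 : ℝ) ≤ n - k := by
      rw [sub_nonneg]
      exact_mod_cast hkn.le
    have hchoose : ((k : ℝ) + 1) * n.choose (k + 1) = (n - k) * n.choose k := by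
      have h := congrArg (Nat.cast (R := ℝ)) (Nat.choose_succ_right_eq n k)
      push_cast [Nat.cast_sub hkn.le] at h
      linarith
    have hcheb := card_mul_sum_pow_card_inter_mul_card_sdiff_le O hl hkn.le
    rw [← le_div_iff₀' hn] at hcheb
    refine le_of_mul_le_mul_left ?_ (by positivity : (0 : ℝ) < k + 1)
    calc ((k : ℝ) + 1) * ∑ T ∈ powersetCard (k + 1) univ, l ^ #(T ∩ O)
        = (n - k) * ∑ S ∈ powersetCard k univ, l ^ #(S ∩ O)
          + (l - 1) * ∑ S ∈ powersetCard k univ, l ^ #(S ∩ O) * #(O \ S) :=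
          succ_mul_sum_pow_card_inter O l k
      _ ≤ (n - k) * ∑ S ∈ powersetCard k univ, l ^ #(S ∩ O)
          + (l - 1) * ((∑ S ∈ powersetCard k univ, l ^ #(S ∩ O)) * (#O * (n - k)) / n) := by
          gcongr
      _ = (n - k) * (∑ S ∈ powersetCard k univ, l ^ #(S ∩ O)) * q := by
          rw [hq_def]
          field_simp
      _ ≤ (n - k) * (n.choose k * q ^ k) * q := by gcongr
      _ = (k + 1) * (n.choose (k + 1) * q ^ (k + 1)) := by
          linear_combination (-(q ^ (k + 1))) * hchoose

end TiltedSum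

theorem card_hypergeometric_upper_tail_le (O : Finset α) (k : ℕ) {d : ℝ} (hd : 0 ≤ d) :
    (#{T ∈ powersetCard k univ | (1 + d) * (#O * k / Fintype.card α) ≤ #(T ∩ O)} : ℝ)
      ≤ (Fintype.card α).choose k
        * Real.exp (-(min d (d ^ 2) * (#O * k / Fintype.card α) / 3)) := by
  set μ : ℝ := #O * k / Fintype.card α
  have hμ : 0 ≤ μ := by positivity
  have hl : 1 ≤ 1 + d := by linarith
  have hlpos : (0 : ℝ) < (1 + d) ^ ((1 + d) * μ) := Real.rpow_pos_of_pos (by linarith) _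
  have hmarkov : (#{T ∈ powersetCard k univ | (1 + d) * μ ≤ #(T ∩ O)} : ℝ)
        * (1 + d) ^ ((1 + d) * μ) ≤ ∑ T ∈ powersetCard k univ, (1 + d) ^ #(T ∩ O) := by
    rw [← nsmul_eq_mul, ← sum_const]
    refine (sum_le_sum fun T hT => ?_).trans
      (sum_le_sum_of_subset_of_nonneg (filter_subset _ _) fun _ _ _ => by positivity)
    rw [← Real.rpow_natCast]
    exact Real.rpow_le_rpow_of_exponent_le hl (mem_filter.1 hT).2
  have hmgf : (1 + d * #O / Fintype.card α) ^ k ≤ Real.exp (d * μ) := by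
    calc (1 + d * #O / Fintype.card α) ^ k ≤ Real.exp (d * #O / Fintype.card α) ^ k := by
          gcongr
          linarith [Real.add_one_le_exp (d * #O / Fintype.card α)]
      _ = Real.exp (d * μ) := by
          rw [← Real.exp_nat_mul]
          simp only [μ]
          ring_nf
  have hrate := Real.min_self_sq_div_three_le_one_add_mul_log_sub hd
  refine le_of_mul_le_mul_right ?_ hlpos
  calc _ ≤ ∑ T ∈ powersetCard k univ, (1 + d) ^ #(T ∩ O) := hmarkov
    _ ≤ (Fintype.card α).choose k * Real.exp (d * μ) := by
        refine (sum_pow_card_inter_le O hl k).trans ?_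
        rw [add_sub_cancel_left]
        gcongr
    _ ≤ (Fintype.card α).choose k * Real.exp (-(min d (d ^ 2) * μ / 3))
          * (1 + d) ^ ((1 + d) * μ) := by
        rw [mul_assoc, Real.rpow_def_of_pos (by linarith), ← Real.exp_add]
        gcongr
        linarith [mul_le_mul_of_nonneg_left hrate hμ]

theorem card_filter_flip_add_two_mul_card_inter (x : α → Bool) (T : Finset α) :
    #{i | (if i ∈ T then !x i else x i) = true} + 2 * #(T ∩ ({i | x i = true} : Finset α))
      = #T + #({i | x i = true} : Finset α) := by
  set O : Finset α := {i | x i = true}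
  have hflip : ({i | (if i ∈ T then !x i else x i) = true} : Finset α) = (T \ O) ∪ (O \ T) := by
    ext i
    by_cases hiT : i ∈ T <;> by_cases hxi : x i = true <;> simp [O, hiT, hxi]
  have hT := card_sdiff_add_card_inter T O
  have hO := card_sdiff_add_card_inter O T
  rw [inter_comm] at hO
  rw [hflip, card_union_of_disjoint disjoint_sdiff_sdiff]
  omega

end Finset

theorem one_add_div_mul_le_of_le_mul_div {a c n k : ℝ} (ha : 0 ≤ a) (hca : c < a)
    (hk : k ≤ n * (a - c) / (2 * a - c)) :
    (1 + a * c / ((2 * a + 1) * (a - c))) * ((1 / 2 + a) * k) ≤ (k + a * n) / 2 := by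
  have hac : 0 < a - c := sub_pos.2 hca
  rw [le_div_iff₀ (by linarith)] at hk
  have hgap : (k + a * n) / 2 - (1 + a * c / ((2 * a + 1) * (a - c))) * ((1 / 2 + a) * k)
      = a / (2 * (a - c)) * (n * (a - c) - k * (2 * a - c)) := by
    field_simp
    ring
  have : 0 ≤ a / (2 * (a - c)) * (n * (a - c) - k * (2 * a - c)) :=
    mul_nonneg (by positivity) (by linarith)
  linarith

theorem hypermutation_below_half_prob_general
    (n : ℕ) (hn : 0 < n) (a c : ℝ) (hc : 0 < c) (hca : c < a)
    (x : Fin n → Bool)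
    (hx : ((Finset.univ.filter (fun i => x i = true)).card : ℝ) = (1 / 2 + a) * n)
    (k : ℕ) (hk2 : (k : ℝ) ≤ (n : ℝ) * (a - c) / (2 * a - c)) :
    ({T : Finset (Fin n) | T.card = k ∧
        ((Finset.univ.filter
            (fun i => (if i ∈ T then !(x i) else x i) = true)).card : ℝ) <
          (n : ℝ) / 2}.ncard : ℝ)
        / (Nat.choose n k : ℝ)
      ≤ Real.exp (-(min (a * c / ((2 * a + 1) * (a - c)))
            ((a * c / ((2 * a + 1) * (a - c))) ^ 2) * (1 / 2 + a) * (k : ℝ) / 3)) := by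
  set O : Finset (Fin n) := univ.filter (fun i => x i = true) with hO
  have ha : 0 < a := hc.trans hca
  have hδ : 0 ≤ a * c / ((2 * a + 1) * (a - c)) :=
    div_nonneg (by positivity) (mul_nonneg (by linarith) (by linarith))
  have hkn : k ≤ n := by
    have : n * (a - c) / (2 * a - c) ≤ n :=
      div_le_of_le_mul₀ (by linarith) (by positivity) (by nlinarith)
    exact_mod_cast hk2.trans this
  have hmean : (#O : ℝ) * k / n = (1 / 2 + a) * k := by
    rw [hx]
    field_simp
  have htail := card_hypergeometric_upper_tail_le O k hδ
  rw [Fintype.card_fin, hmean] at htail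
  rw [div_le_iff₀ (by exact_mod_cast Nat.choose_pos hkn)]
  refine le_trans ?_ (htail.trans_eq (by rw [mul_comm, ← mul_assoc (min _ _)]))
  rw [Nat.cast_le, ← Set.ncard_coe_finset]
  refine Set.ncard_le_ncard (fun T ⟨hTk, hT⟩ => ?_) (Finset.finite_toSet _)
  have hflip := congrArg (Nat.cast (R := ℝ)) (card_filter_flip_add_two_mul_card_inter x T)
  rw [← hO, hTk] at hflip
  push_cast at hflip
  simp only [coe_filter, mem_powersetCard, subset_univ, true_and, Set.mem_ofPred_eq]
  refine ⟨hTk, ?_⟩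
  linarith [one_add_div_mul_le_of_le_mul_div ha.le hca hk2]

/-- If `x ∈ {0,1}ⁿ` has exactly `(1/2 + a)n` one-bits and `T` is a uniformly random
`k`-element subset of the positions with `1 ≤ k ≤ n(a-c)/(2a-c)`, then, with
`δ := ac/((2a+1)(a-c))`, the probability that the string obtained from `x` by flipping
exactly the bits in `T` has fewer than `n/2` one-bits is at most
`exp(-min(δ,δ²) (1/2+a) k / 3)`. -/
theorem hypermutation_below_half_prob
    (n : ℕ) (hn : 0 < n) (a c : ℝ) (hc : 0 < c) (hca : c < a) (ha : a ≤ 1 / 2)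
    (x : Fin n → Bool)
    (hx : ((Finset.univ.filter (fun i => x i = true)).card : ℝ) = (1 / 2 + a) * n)
    (k : ℕ) (hk1 : 1 ≤ k) (hk2 : (k : ℝ) ≤ (n : ℝ) * (a - c) / (2 * a - c)) :
    ({T : Finset (Fin n) | T.card = k ∧
        ((Finset.univ.filter
            (fun i => (if i ∈ T then !(x i) else x i) = true)).card : ℝ) <
          (n : ℝ) / 2}.ncard : ℝ)
        / (Nat.choose n k : ℝ)
      ≤ Real.exp (-(min (a * c / ((2 * a + 1) * (a - c)))
            ((a * c / ((2 * a + 1) * (a - c))) ^ 2) * (1 / 2 + a) * (k : ℝ) / 3)) :=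
  hypermutation_below_half_prob_general n hn a c hc hca x hx k hk2
end

section
/- Let p₁ ≥ p₂ ≥ … ≥ pₙ > 0 be the processing times of a Partition instance, let ε be a real with 0 < ε ≤ 1, and set s := ⌈2/ε⌉ − 1; assume s < n. If x is a local optimum whose fuller machine contains at least one small job (a job with index greater than s), then f(x) ≤ (1+ε)·y*. -/
/-- The optimal makespan `y*` of the instance. -/
noncomputable def optMakespan {n : ℕ} (p : Fin n → ℝ) : ℝ :=
  Finset.univ.inf' Finset.univ_nonempty (makespan p)

lemma load_eq_sum_ite {n : ℕ} (p : Fin n → ℝ) (x : Fin n → Bool) (b : Bool) :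
    load p x b = ∑ i, if x i = b then p i else 0 := by
  rw [load, Finset.sum_filter]

lemma load_add_load {n : ℕ} (p : Fin n → ℝ) (x : Fin n → Bool) :
    load p x false + load p x true = ∑ i, p i := by
  rw [load_eq_sum_ite, load_eq_sum_ite, ← Finset.sum_add_distrib]
  apply Finset.sum_congr rfl
  intro i _
  cases hx : x i <;> simp [hx]

lemma load_update {n : ℕ} (p : Fin n → ℝ) (x : Fin n → Bool) (j : Fin n) (c b : Bool) :
    load p (Function.update x j c) b =
      load p x b + (if c = b then p j else 0) - (if x j = b then p j else 0) := by
  rw [load_eq_sum_ite, load_eq_sum_ite]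
  have key : (fun i => if Function.update x j c i = b then p i else 0) =
      Function.update (fun i => if x i = b then p i else 0) j (if c = b then p j else 0) := by
    funext i
    rcases eq_or_ne i j with rfl | h
    · simp [Function.update_self]
    · simp [Function.update_of_ne h]
  rw [key, Finset.sum_update_of_mem (Finset.mem_univ j)]
  rw [← Finset.add_sum_erase Finset.univ _ (Finset.mem_univ j)]
  simp [Finset.sdiff_singleton_eq_erase]
  ring

/-- A local optimum whose fuller machine contains a small job (zero-based index at least
`s := ⌈2/ε⌉ - 1`) is a `(1+ε)` approximation. -/
theorem localOpt_with_small_on_fuller_is_approx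
    (n : ℕ) (p : Fin n → ℝ) (hpos : ∀ i, 0 < p i)
    (hmono : ∀ i j : Fin n, i ≤ j → p j ≤ p i)
    (ε : ℝ) (hε0 : 0 < ε) (hε1 : ε ≤ 1)
    (s : ℕ) (hs : (s : ℤ) = ⌈(2 : ℝ) / ε⌉ - 1) (hsn : s < n)
    (x : Fin n → Bool) (hlo : IsLocalOpt p x)
    (hsmall : ∃ b : Bool, load p x b = makespan p x ∧ ∃ i : Fin n, x i = b ∧ s ≤ (i : ℕ)) :
    makespan p x ≤ (1 + ε) * optMakespan p := by
  obtain ⟨b, hb, i, hib, hsi⟩ := hsmall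
  set T : ℝ := ∑ j, p j with hTdef
  have hT : load p x false + load p x true = T := load_add_load p x
  have hTb : load p x b + load p x (!b) = T := by cases b <;> simp_all [add_comm]
  -- local optimality at job i
  have hkey : load p x b ≤ load p x (!b) + p i := by
    have hnot := hlo i
    rw [hib] at hnot
    have hms : makespan p x ≤ makespan p (Function.update x i (!b)) := le_of_not_gt hnot
    rw [← hb] at hms
    have h1 : load p (Function.update x i (!b)) b = load p x b - p i := by
      rw [load_update, hib]
      simp
    have h2 : load p (Function.update x i (!b)) (!b) = load p x (!b) + p i := by
      rw [load_update, hib]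
      cases b <;> simp
    have hmax : makespan p (Function.update x i (!b)) =
        max (load p x b - p i) (load p x (!b) + p i) := by
      cases b
      · rw [makespan]
        simp only [Bool.not_false] at h1 h2 ⊢
        rw [h1, h2]
      · rw [makespan]
        simp only [Bool.not_true] at h1 h2 ⊢
        rw [h1, h2, max_comm]
    rw [hmax, le_max_iff] at hms
    rcases hms with h | h
    · have := hpos i; linarith
    · exact h
  -- optimal makespan bounds
  have hy2 : T ≤ 2 * optMakespan p := by
    have : T / 2 ≤ optMakespan p := by
      rw [optMakespan]
      apply Finset.le_inf'
      intro y _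
      have h1 := le_max_left (load p y false) (load p y true)
      have h2 := le_max_right (load p y false) (load p y true)
      have h3 := load_add_load p y
      rw [makespan]
      linarith
    linarith
  -- there are at least s+1 jobs of size ≥ p i
  have hsum_ge : ((s : ℝ) + 1) * p i ≤ T := by
    have h1 : ((Finset.Iic i).card : ℝ) * p i ≤ ∑ j ∈ Finset.Iic i, p j := by
      have := Finset.card_nsmul_le_sum (Finset.Iic i) p (p i)
        (fun j hj => hmono j i (Finset.mem_Iic.mp hj))
      simpa [nsmul_eq_mul] using this
    have h2 : ∑ j ∈ Finset.Iic i, p j ≤ T := by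
      apply Finset.sum_le_sum_of_subset_of_nonneg (Finset.subset_univ _)
      intro j _ _
      exact (hpos j).le
    have h3 : (s : ℝ) + 1 ≤ ((Finset.Iic i).card : ℝ) := by
      rw [Fin.card_Iic]
      push_cast
      have : (s : ℝ) ≤ (i : ℝ) := by exact_mod_cast hsi
      linarith
    nlinarith [hpos i]
  -- s + 1 ≥ 2/ε
  have hceil : (2 : ℝ) / ε ≤ (s : ℝ) + 1 := by
    have h1 : ((s : ℤ) + 1 : ℝ) = (⌈(2 : ℝ) / ε⌉ : ℝ) := by
      rw [hs]; push_cast; ring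
    have h2 := Int.le_ceil ((2 : ℝ) / ε)
    push_cast at h1 ⊢
    linarith
  have hε2 : 2 ≤ ε * ((s : ℝ) + 1) := by
    rw [div_le_iff₀ hε0] at hceil
    linarith
  -- p i is small relative to opt
  have hT0 : 0 < T := by nlinarith [hpos i]
  have hopt0 : 0 ≤ optMakespan p := by linarith
  have hpi : p i ≤ ε * optMakespan p := by
    nlinarith [hpos i, mul_le_mul_of_nonneg_left hsum_ge hε0.le]
  -- conclude
  have hms : makespan p x = load p x b := hb.symm
  nlinarith [mul_nonneg hε0.le hopt0]
end

section
/- Let p₁ ≥ p₂ ≥ … ≥ pₙ > 0 be the processing times of a Partition instance, let ε be a real with 0 < ε ≤ 1, and set s := ⌈2/ε⌉ − 1; assume s < n. If ∑_{i=s+1}^{n} p_i ≥ (1/2)·∑_{i=1}^{n} p_i, then every local optimum x satisfies f(x) ≤ (1+ε)·y*. -/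
lemma load_total {n : ℕ} (p : Fin n → ℝ) (x : Fin n → Bool) (b : Bool) :
    load p x b + load p x (!b) = ∑ i, p i := by
  classical
  have h := Finset.sum_filter_add_sum_filter_not Finset.univ (fun i => x i = b) p
  rw [load, load, ← h]
  congr 1
  apply Finset.sum_congr _ (fun _ _ => rfl)
  ext i
  simp [Bool.not_eq]
  cases hx : x i <;> cases b <;> simp_all

lemma load_update_same {n : ℕ} (p : Fin n → ℝ) (x : Fin n → Bool) (j : Fin n) :
    load p (Function.update x j (!x j)) (x j) = load p x (x j) - p j := by
  classical
  unfold load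
  have h1 : Finset.univ.filter (fun i => Function.update x j (!x j) i = x j)
      = (Finset.univ.filter (fun i => x i = x j)).erase j := by
    ext i
    by_cases hij : i = j <;> simp [Function.update_apply, hij, Finset.mem_erase]
  rw [h1, Finset.sum_erase_eq_sub (by simp)]

lemma load_update_other {n : ℕ} (p : Fin n → ℝ) (x : Fin n → Bool) (j : Fin n) :
    load p (Function.update x j (!x j)) (!x j) = load p x (!x j) + p j := by
  classical
  unfold load
  have h1 : Finset.univ.filter (fun i => Function.update x j (!x j) i = !x j)
      = insert j (Finset.univ.filter (fun i => x i = !x j)) := by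
    ext i
    by_cases hij : i = j <;> simp [Function.update_apply, hij]
  rw [h1, Finset.sum_insert (by simp)]
  ring

lemma makespan_eq_max {n : ℕ} (p : Fin n → ℝ) (x : Fin n → Bool) (b : Bool) :
    makespan p x = max (load p x b) (load p x (!b)) := by
  cases b <;> simp [makespan, max_comm]


/-- If the small jobs (zero-based indices at least `s := ⌈2/ε⌉ - 1`) make up at least half
of the total processing time, then every local optimum is a `(1+ε)` approximation. -/
theorem all_localOpt_approx_of_small_heavy
    (n : ℕ) (p : Fin n → ℝ) (hpos : ∀ i, 0 < p i)
    (hmono : ∀ i j : Fin n, i ≤ j → p j ≤ p i)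
    (ε : ℝ) (hε0 : 0 < ε) (hε1 : ε ≤ 1)
    (s : ℕ) (hs : (s : ℤ) = ⌈(2 : ℝ) / ε⌉ - 1) (hsn : s < n)
    (hheavy : (1 / 2) * ∑ i, p i ≤
        ∑ i ∈ Finset.univ.filter (fun i : Fin n => s ≤ (i : ℕ)), p i) :
    ∀ x : Fin n → Bool, IsLocalOpt p x → makespan p x ≤ (1 + ε) * optMakespan p := by
  intro x hloc
  classical
  have hn : 0 < n := lt_of_le_of_lt (Nat.zero_le s) hsn
  haveI : NeZero n := ⟨hn.ne'⟩
  set T : ℝ := ∑ i, p i with hT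
  have hTpos : 0 < T := Finset.sum_pos (fun i _ => hpos i) Finset.univ_nonempty
  -- every makespan is at least T/2
  have hhalf : ∀ y : Fin n → Bool, T / 2 ≤ makespan p y := by
    intro y
    have htot := load_total p y false
    have h1 := le_max_left (load p y false) (load p y true)
    have h2 := le_max_right (load p y false) (load p y true)
    rw [makespan]
    simp only [Bool.not_false] at htot
    linarith
  have hopt : T / 2 ≤ optMakespan p := by
    apply Finset.le_inf'
    intro y _
    exact hhalf y
  -- choose the fuller machine b
  obtain ⟨b, hbL, hother⟩ : ∃ b, load p x b = makespan p x ∧ load p x (!b) ≤ load p x b := by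
    rcases le_total (load p x true) (load p x false) with h | h
    · exact ⟨false, by simp [makespan, max_eq_left h], by simpa using h⟩
    · exact ⟨true, by simp [makespan, max_eq_right h], by simpa using h⟩
  set L : ℝ := makespan p x with hLdef
  -- local optimality: any job on fuller machine satisfies L ≤ T - L + p j
  have hkey : ∀ j : Fin n, x j = b → L ≤ T - L + p j := by
    intro j hj
    have hloc' := hloc j
    have h1 : load p (Function.update x j (!x j)) b = L - p j := by
      rw [← hj, load_update_same, hj, hbL]
    have h2 : load p (Function.update x j (!x j)) (!b) = (T - L) + p j := by
      have := load_total p x b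
      rw [← hj, load_update_other, hj]
      rw [hbL] at this
      linarith
    have hm : makespan p (Function.update x j (!x j))
        = max (L - p j) ((T - L) + p j) := by
      rw [makespan_eq_max p _ b, h1, h2]
    have hnotlt : L ≤ max (L - p j) ((T - L) + p j) := by
      rw [← hm]; exact not_lt.mp hloc'
    rcases le_max_iff.mp hnotlt with h | h
    · have := hpos j; linarith
    · linarith
  by_cases hsmall : ∃ j : Fin n, s ≤ (j : ℕ) ∧ x j = b
  · -- a small job is on the fuller machine
    obtain ⟨j, hjs, hjb⟩ := hsmall
    have h1 : L ≤ T - L + p j := hkey j hjb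
    set ps : ℝ := p ⟨s, hsn⟩ with hps
    have h2 : p j ≤ ps := hmono ⟨s, hsn⟩ j (by simpa [Fin.le_def] using hjs)
    -- (s+1) * ps ≤ T
    have h3 : ((s : ℝ) + 1) * ps ≤ T := by
      have hsub : Finset.Iic (⟨s, hsn⟩ : Fin n) ⊆ Finset.univ := Finset.subset_univ _
      have hcard : (Finset.Iic (⟨s, hsn⟩ : Fin n)).card = s + 1 := by
        simp [Nat.card_Iic]
      have hle : (Finset.Iic (⟨s, hsn⟩ : Fin n)).card • ps
          ≤ ∑ i ∈ Finset.Iic (⟨s, hsn⟩ : Fin n), p i :=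
        Finset.card_nsmul_le_sum _ _ _ (fun i hi => hmono i ⟨s, hsn⟩ (Finset.mem_Iic.mp hi))
      have hle2 : ∑ i ∈ Finset.Iic (⟨s, hsn⟩ : Fin n), p i ≤ T :=
        Finset.sum_le_sum_of_subset_of_nonneg hsub (fun i _ _ => (hpos i).le)
      rw [hcard] at hle
      push_cast [nsmul_eq_mul] at hle
      linarith
    -- 2 ≤ (s+1) * ε
    have h4 : 2 ≤ ((s : ℝ) + 1) * ε := by
      have hceil : (2 : ℝ) / ε ≤ ((⌈(2 : ℝ) / ε⌉ : ℤ) : ℝ) := Int.le_ceil _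
      have hs' : ((s : ℝ) + 1) = ((⌈(2 : ℝ) / ε⌉ : ℤ) : ℝ) := by
        have : ((s : ℤ) : ℝ) = ((⌈(2 : ℝ) / ε⌉ - 1 : ℤ) : ℝ) := by rw [hs]
        push_cast at this
        push_cast
        linarith
      rw [hs']
      calc (2 : ℝ) = (2 / ε) * ε := by field_simp
        _ ≤ _ := by
            apply mul_le_mul_of_nonneg_right hceil hε0.le
    have hpspos : 0 < ps := hpos _
    have hyO : 0 ≤ optMakespan p := le_trans (by linarith) hopt
    nlinarith [mul_le_mul_of_nonneg_left h3 hε0.le,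
      mul_le_mul_of_nonneg_right h4 hpspos.le,
      mul_nonneg hε0.le hyO]
  · -- all small jobs on the other machine
    push_neg at hsmall
    have hsub : Finset.univ.filter (fun i : Fin n => s ≤ (i : ℕ))
        ⊆ Finset.univ.filter (fun i => x i = !b) := by
      intro i hi
      simp only [Finset.mem_filter, Finset.mem_univ, true_and] at hi ⊢
      have := hsmall i hi
      cases hb : x i <;> cases b <;> simp_all
    have hload : ∑ i ∈ Finset.univ.filter (fun i : Fin n => s ≤ (i : ℕ)), p i
        ≤ load p x (!b) :=
      Finset.sum_le_sum_of_subset_of_nonneg hsub (fun i _ _ => (hpos i).le)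
    have htot := load_total p x b
    rw [hbL] at htot
    -- L ≤ T/2
    have hLle : L ≤ T / 2 := by linarith
    have hyO : 0 ≤ optMakespan p := le_trans (by linarith) hopt
    nlinarith [mul_nonneg hε0.le hyO]
end
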